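/- arXiv:1707.09257 — 3 statements merged into one kernel-verified Lean document; each statement's English description precedes it below -/
import Mathlib

section
/- Let p ∈ (1, ∞), let E = ℂ² with the ℓ^p norm, and let f be the operator given by the matrix with rows (1,1) and (0,0). Then f is idempotent and its operator norm equals 2^{1 - 1/p}. -/
open scoped ENNReal

/- The upper bound `‖f x‖ = ‖x 0 + x 1‖ ≤ 2 ^ (1 - 1/p) ‖x‖_p` is the power-mean (Hölder)
inequality between the `ℓ¹` and `ℓ^p` norms on `ℂ²`; it is an equality at `x = (1, 1)`. -/

namespace PiLp

variable {ι E : Type*} [Fintype ι] [SeminormedAddCommGroup E] {p : ℝ≥0∞} [Fact (1 ≤ p)]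

lemma norm_sum_le_card_rpow_mul_norm (hp : p ≠ ⊤) (x : PiLp p (fun _ : ι => E)) :
    ‖∑ i, x i‖ ≤ (Fintype.card ι : ℝ) ^ (1 - 1 / p.toReal) * ‖x‖ := by
  have hr : 1 ≤ p.toReal := by simpa using ENNReal.toReal_mono hp (Fact.out : 1 ≤ p)
  have hr0 : 0 < p.toReal := one_pos.trans_le hr
  have hpower_mean := Real.rpow_sum_le_const_mul_sum_rpow Finset.univ (fun i => ‖x i‖) hr
  simp only [abs_norm, Finset.card_univ] at hpower_mean
  calc ‖∑ i, x i‖ ≤ ∑ i, ‖x i‖ := norm_sum_le _ _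
    _ = ((∑ i, ‖x i‖) ^ p.toReal) ^ (1 / p.toReal) := by
        rw [one_div, Real.rpow_rpow_inv (by positivity) hr0.ne']
    _ ≤ ((Fintype.card ι : ℝ) ^ (p.toReal - 1) * ∑ i, ‖x i‖ ^ p.toReal) ^ (1 / p.toReal) :=
        Real.rpow_le_rpow (by positivity) hpower_mean (by positivity)
    _ = (Fintype.card ι : ℝ) ^ (1 - 1 / p.toReal) * ‖x‖ := by
        rw [Real.mul_rpow (by positivity) (by positivity), ← Real.rpow_mul (by positivity),
          norm_eq_sum hr0]
        congr 2
        field_simp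

end PiLp

section TwoByTwo

variable {p : ℝ≥0∞} {f : PiLp p (fun _ : Fin 2 => ℂ) →L[ℂ] PiLp p (fun _ : Fin 2 => ℂ)}

lemma apply_eq_single_zero_add
    (hf : ∀ x : PiLp p (fun _ : Fin 2 => ℂ), f x 0 = x 0 + x 1 ∧ f x 1 = 0)
    (x : PiLp p (fun _ : Fin 2 => ℂ)) : f x = PiLp.single p 0 (x 0 + x 1) := by
  ext i
  fin_cases i <;> simp [hf]

lemma comp_self_eq_self_of_apply_eq_add
    (hf : ∀ x : PiLp p (fun _ : Fin 2 => ℂ), f x 0 = x 0 + x 1 ∧ f x 1 = 0) :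
    f ∘L f = f := by
  ext x i
  fin_cases i <;> simp [hf]

lemma opNorm_eq_two_rpow_of_apply_eq_add [Fact (1 ≤ p)] (hp : p ≠ ⊤)
    (hf : ∀ x : PiLp p (fun _ : Fin 2 => ℂ), f x 0 = x 0 + x 1 ∧ f x 1 = 0) :
    ‖f‖ = 2 ^ (1 - 1 / p.toReal) := by
  have hnorm (x : PiLp p (fun _ : Fin 2 => ℂ)) : ‖f x‖ = ‖x 0 + x 1‖ := by
    rw [apply_eq_single_zero_add hf, PiLp.norm_single]
  refine le_antisymm (f.opNorm_le_bound (by positivity) fun x => ?_) ?_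
  · simpa [hnorm, Fin.sum_univ_two] using PiLp.norm_sum_le_card_rpow_mul_norm hp x
  · set one : PiLp p (fun _ : Fin 2 => ℂ) := WithLp.toLp p (Function.const (Fin 2) 1)
    have hone : ‖one‖ = 2 ^ (1 / p.toReal) := by
      rw [PiLp.norm_toLp_const hp]
      simp
    have hf_one : ‖f one‖ = 2 := by
      rw [hnorm]
      norm_num [one]
    have := f.le_opNorm one
    rw [hf_one, hone] at this
    rw [Real.rpow_sub two_pos, Real.rpow_one, div_le_iff₀ (by positivity)]
    exact this

end TwoByTwo

theorem stmt_2_general (p : ℝ≥0∞) [Fact (1 ≤ p)] (hp : p ≠ ⊤)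
    (f : PiLp p (fun _ : Fin 2 => ℂ) →L[ℂ] PiLp p (fun _ : Fin 2 => ℂ))
    (hf : ∀ x : PiLp p (fun _ : Fin 2 => ℂ), f x 0 = x 0 + x 1 ∧ f x 1 = 0) :
    f ∘L f = f ∧ ‖f‖ = 2 ^ (1 - 1 / p.toReal) :=
  ⟨comp_self_eq_self_of_apply_eq_add hf, opNorm_eq_two_rpow_of_apply_eq_add hp hf⟩

/-- For `p ∈ (1, ∞)`, the operator on `ℓ^p_2 = (ℂ², ‖·‖_p)` given by the
matrix with rows `(1,1)` and `(0,0)` is an idempotent of operator norm `2^(1 - 1/p)`. -/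
theorem stmt_2 (p : ℝ≥0∞) [Fact (1 ≤ p)] (hp1 : 1 < p) (hp : p ≠ ⊤)
    (f : PiLp p (fun _ : Fin 2 => ℂ) →L[ℂ] PiLp p (fun _ : Fin 2 => ℂ))
    (hf : ∀ x : PiLp p (fun _ : Fin 2 => ℂ), f x 0 = x 0 + x 1 ∧ f x 1 = 0) :
    f ∘L f = f ∧ ‖f‖ = 2 ^ (1 - 1 / p.toReal) :=
  stmt_2_general p hp f hf
end

section
/- Let A be a unital Banach algebra with ‖1‖ = 1 and let e ∈ A be an idempotent. Then ‖exp(iλe)‖ ≤ 1 for all real λ if and only if the homomorphism β_e : ℂ ⊕ ℂ → A, β_e(λ₁, λ₂) = λ₁ e + λ₂(1 − e), is contractive, where ℂ ⊕ ℂ carries the maximum norm. -/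
/-!
Since `e` and `1 - e` are complementary idempotents, `(a, b) ↦ a • e + b • (1 - e)` is a
continuous unital algebra homomorphism `ℂ × ℂ → A`, hence commutes with `exp`; this gives
`exp (c • e) = exp c • e + (1 - e)`. The exponential condition therefore says exactly that
`‖z • e + (1 - e)‖ ≤ 1` on the unit circle. By the maximum modulus principle the same bound holds
on the closed unit disc, and homogeneity turns it into `‖a • e + b • (1 - e)‖ ≤ max ‖a‖ ‖b‖`.
-/

open Metric

/-- The homomorphism `β_e` of the statement. -/
def IsIdempotentElem.prodAlgHom {R A : Type*} [CommRing R] [Ring A] [Algebra R A] {e : A}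
    (he : IsIdempotentElem e) : R × R →ₐ[R] A where
  toFun p := p.1 • e + p.2 • (1 - e)
  map_one' := by simp
  map_mul' p q := by
    have h₁ : e * (1 - e) = 0 := by rw [mul_sub, mul_one, he.eq, sub_self]
    have h₂ : (1 - e) * e = 0 := by rw [sub_mul, one_mul, he.eq, sub_self]
    have h₃ : (1 - e) * (1 - e) = 1 - e := he.one_sub.eq
    simp only [Prod.fst_mul, Prod.snd_mul, add_mul, mul_add, smul_mul_smul_comm, he.eq, h₁, h₂, h₃,
      smul_zero, add_zero, zero_add]
  map_zero' := by simp
  map_add' p q := by simp only [Prod.fst_add, Prod.snd_add, add_smul]; abel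
  commutes' r := by simp [Algebra.algebraMap_eq_smul_one, ← smul_add]

theorem IsIdempotentElem.continuous_prodAlgHom {A : Type*} [NormedRing A] [NormedAlgebra ℂ A]
    {e : A} (he : IsIdempotentElem e) : Continuous (he.prodAlgHom (R := ℂ)) := by
  change Continuous fun p : ℂ × ℂ => p.1 • e + p.2 • (1 - e)
  fun_prop

theorem IsIdempotentElem.exp_smul {A : Type*} [NormedRing A] [NormedAlgebra ℂ A] {e : A}
    (he : IsIdempotentElem e) (c : ℂ) :
    NormedSpace.exp (c • e) = Complex.exp c • e + (1 - e) := by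
  have hc : c • e = he.prodAlgHom (c, 0) := by simp [IsIdempotentElem.prodAlgHom]
  rw [hc, ← NormedSpace.map_exp_of_mem_ball (𝕂 := ℂ) _ he.continuous_prodAlgHom _
    ((NormedSpace.expSeries_radius_eq_top ℂ (ℂ × ℂ)).symm ▸ edist_lt_top _ _)]
  have hexp : NormedSpace.exp ((c, 0) : ℂ × ℂ) = (Complex.exp c, 1) := by
    ext <;> simp [Complex.exp_eq_exp_ℂ]
  simp [hexp, IsIdempotentElem.prodAlgHom]

section UnitCircle

variable {E : Type*} [NormedAddCommGroup E] [NormedSpace ℂ E] {x y : E}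

theorem norm_smul_add_le_one_of_sphere (h : ∀ z : ℂ, ‖z‖ = 1 → ‖z • x + y‖ ≤ 1) {z : ℂ}
    (hz : ‖z‖ ≤ 1) : ‖z • x + y‖ ≤ 1 := by
  have hf : DiffContOnCl ℂ (fun w : ℂ => w • x + y) (ball 0 1) :=
    ((differentiable_id.smul_const x).add_const y).diffContOnCl
  refine Complex.norm_le_of_forall_mem_frontier_norm_le isBounded_ball hf (fun w hw => ?_) ?_
  · rw [frontier_ball 0 one_ne_zero, mem_sphere_zero_iff_norm] at hw
    exact h w hw
  · rwa [closure_ball 0 one_ne_zero, mem_closedBall_zero_iff]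

theorem norm_smul_add_le_one_of_sphere_swap (h : ∀ z : ℂ, ‖z‖ = 1 → ‖z • x + y‖ ≤ 1) (z : ℂ)
    (hz : ‖z‖ = 1) : ‖z • y + x‖ ≤ 1 := by
  have hz₀ : z ≠ 0 := norm_ne_zero_iff.mp (by rw [hz]; exact one_ne_zero)
  have : z • y + x = z • (z⁻¹ • x + y) := by
    rw [smul_add, smul_inv_smul₀ hz₀, add_comm]
  rw [this, norm_smul, hz, one_mul]
  exact h _ (by rw [norm_inv, hz, inv_one])

theorem norm_smul_add_smul_le_of_sphere (h : ∀ z : ℂ, ‖z‖ = 1 → ‖z • x + y‖ ≤ 1) {a b : ℂ}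
    (hab : ‖a‖ ≤ ‖b‖) : ‖a • x + b • y‖ ≤ ‖b‖ := by
  rcases eq_or_ne b 0 with rfl | hb
  · simp [norm_le_zero_iff.mp (by simpa using hab)]
  have : a • x + b • y = b • ((a / b) • x + y) := by
    rw [smul_add, smul_smul, mul_div_cancel₀ _ hb]
  rw [this, norm_smul]
  refine mul_le_of_le_one_right (norm_nonneg b) (norm_smul_add_le_one_of_sphere h ?_)
  rw [norm_div]
  exact div_le_one_of_le₀ hab (norm_nonneg b)

theorem norm_smul_add_smul_le_max_of_sphere (h : ∀ z : ℂ, ‖z‖ = 1 → ‖z • x + y‖ ≤ 1)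
    (a b : ℂ) : ‖a • x + b • y‖ ≤ max ‖a‖ ‖b‖ := by
  rcases le_total ‖a‖ ‖b‖ with hab | hba
  · exact (norm_smul_add_smul_le_of_sphere h hab).trans (le_max_right _ _)
  · rw [add_comm]
    exact (norm_smul_add_smul_le_of_sphere (norm_smul_add_le_one_of_sphere_swap h) hba).trans
      (le_max_left _ _)

end UnitCircle

theorem stmt_7_general {A : Type*} [NormedRing A] [NormedAlgebra ℂ A]
    (e : A) (he : e * e = e) :
    (∀ l : ℝ, ‖NormedSpace.exp (((l : ℂ) * Complex.I) • e)‖ ≤ 1) ↔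
      (∀ l₁ l₂ : ℂ, ‖l₁ • e + l₂ • (1 - e)‖ ≤ max ‖l₁‖ ‖l₂‖) := by
  simp_rw [IsIdempotentElem.exp_smul he]
  constructor
  · intro h
    refine norm_smul_add_smul_le_max_of_sphere fun z hz => ?_
    have hz_exp : Complex.exp (z.arg * Complex.I) = z := by
      simpa [hz] using Complex.norm_mul_exp_arg_mul_I z
    simpa [hz_exp] using h z.arg
  · intro h l
    simpa [Complex.norm_exp_ofReal_mul_I] using h (Complex.exp (l * Complex.I)) 1

/-- Let `A` be a unital Banach algebra with `‖1‖ = 1` and `e ∈ A` an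
idempotent.  Then `‖exp(iλe)‖ ≤ 1` for all real `λ` iff the homomorphism
`β_e : ℂ ⊕ ℂ → A`, `(λ₁, λ₂) ↦ λ₁ e + λ₂ (1 - e)`, is contractive for the maximum norm. -/
theorem stmt_7 {A : Type*} [NormedRing A] [NormedAlgebra ℂ A] [CompleteSpace A] [NormOneClass A]
    (e : A) (he : e * e = e) :
    (∀ l : ℝ, ‖NormedSpace.exp (((l : ℂ) * Complex.I) • e)‖ ≤ 1) ↔
      (∀ l₁ l₂ : ℂ, ‖l₁ • e + l₂ • (1 - e)‖ ≤ max ‖l₁‖ ‖l₂‖) :=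
  stmt_7_general e he
end

section
/- Let p ∈ [1, ∞) with p ≠ 2 and let d ∈ ℤ_{>0}. A matrix s ∈ M_d(ℂ) is an invertible isometry of ℓ^p_d if and only if s is a complex permutation matrix, i.e., s = Σ_{j=1}^d λ_j e_{σ(j),j} for some permutation σ of {1,…,d} and scalars λ_j with |λ_j| = 1. -/
/-!
For `q ≠ 2` one of `± t ^ (q / 2)` is strictly convex on `[0, ∞)` and vanishes at `0`; combined
with the parallelogram law this gives `‖a + b‖ ^ q + ‖a - b‖ ^ q ≥ 2 (‖a‖ ^ q + ‖b‖ ^ q)` (for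
`q > 2`, the reverse for `q < 2`), strictly unless `a = 0` or `b = 0`. An `ℓ^q`-isometry `s` maps
`e_j ± e_k` to `s_j ± s_k`, where `s_j` and `s_k` are columns of unit `ℓ^q` norm, so these
inequalities summed over the rows are equalities. Hence every row meets the support of at most one
of any two columns; as no column vanishes, `s` is a permutation matrix with unimodular entries.
Conversely such a matrix is a permutation matrix times an invertible diagonal one, whose entries
have modulus one, and both factors visibly preserve `∑ ‖ξ i‖ ^ q`.
-/

open scoped ENNReal

/-- A `d × d` complex matrix, viewed as a bounded operator on `ℓ^p_d`. -/
noncomputable def matrixLp (p : ℝ≥0∞) [Fact (1 ≤ p)] {d : ℕ}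
    (M : Matrix (Fin d) (Fin d) ℂ) :
    PiLp p (fun _ : Fin d => ℂ) →L[ℂ] PiLp p (fun _ : Fin d => ℂ) :=
  LinearMap.toContinuousLinearMap
    ((WithLp.linearEquiv p ℂ (∀ _ : Fin d, ℂ)).symm.toLinearMap ∘ₗ
      M.mulVecLin ∘ₗ (WithLp.linearEquiv p ℂ (∀ _ : Fin d, ℂ)).toLinearMap)

open Matrix Set

namespace StrictConvexOn

variable {f : ℝ → ℝ}

theorem add_lt_map_add (hf : StrictConvexOn ℝ (Ici 0) f) (hf0 : f 0 = 0)
    {x y : ℝ} (hx : 0 < x) (hy : 0 < y) : f x + f y < f (x + y) := by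
  have below_chord : ∀ {a b : ℝ}, 0 < a → 0 < b → f a < a / (a + b) * f (a + b) := by
    intro a b ha hb
    have hab : 0 < a + b := add_pos ha hb
    have h := hf.2 (mem_Ici.2 hab.le) self_mem_Ici hab.ne' (div_pos ha hab) (div_pos hb hab)
      (by field_simp)
    simpa [hf0, div_mul_cancel₀ _ hab.ne'] using h
  have hsum : x / (x + y) + y / (x + y) = 1 := by field_simp
  calc f x + f y < x / (x + y) * f (x + y) + y / (x + y) * f (x + y) :=
        add_lt_add (below_chord hx hy) (add_comm y x ▸ below_chord hy hx)
    _ = f (x + y) := by rw [← add_mul, hsum, one_mul]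

variable {E : Type*} [NormedAddCommGroup E] [InnerProductSpace ℝ E]

theorem two_mul_add_lt_norm_add_sq_add_norm_sub_sq (hf : StrictConvexOn ℝ (Ici 0) f)
    (hf0 : f 0 = 0) {a b : E} (ha : a ≠ 0) (hb : b ≠ 0) :
    2 * (f (‖a‖ ^ 2) + f (‖b‖ ^ 2)) < f (‖a + b‖ ^ 2) + f (‖a - b‖ ^ 2) := by
  have hpar : ‖a‖ ^ 2 + ‖b‖ ^ 2 = 1 / 2 * ‖a + b‖ ^ 2 + 1 / 2 * ‖a - b‖ ^ 2 := by
    have := parallelogram_law_with_norm ℝ a b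
    linarith [sq ‖a‖, sq ‖b‖, sq ‖a + b‖, sq ‖a - b‖]
  have hmid := hf.convexOn.2 (mem_Ici.2 (sq_nonneg ‖a + b‖)) (mem_Ici.2 (sq_nonneg ‖a - b‖))
    (by norm_num : (0 : ℝ) ≤ 1 / 2) (by norm_num : (0 : ℝ) ≤ 1 / 2) (by norm_num)
  simp only [smul_eq_mul, ← hpar] at hmid
  have hsuper := hf.add_lt_map_add hf0 (by positivity : 0 < ‖a‖ ^ 2) (by positivity : 0 < ‖b‖ ^ 2)
  linarith

theorem two_mul_add_le_norm_add_sq_add_norm_sub_sq (hf : StrictConvexOn ℝ (Ici 0) f)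
    (hf0 : f 0 = 0) (a b : E) :
    2 * (f (‖a‖ ^ 2) + f (‖b‖ ^ 2)) ≤ f (‖a + b‖ ^ 2) + f (‖a - b‖ ^ 2) := by
  rcases eq_or_ne a 0 with rfl | ha
  · simp [hf0, two_mul]
  rcases eq_or_ne b 0 with rfl | hb
  · simp [hf0, two_mul]
  exact (two_mul_add_lt_norm_add_sq_add_norm_sub_sq hf hf0 ha hb).le

theorem eq_zero_or_eq_zero_of_sum_eq {ι : Type*} [Fintype ι] (hf : StrictConvexOn ℝ (Ici 0) f)
    (hf0 : f 0 = 0) {u v : ι → E}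
    (h : ∑ i, (f (‖u i + v i‖ ^ 2) + f (‖u i - v i‖ ^ 2)) =
      2 * ∑ i, (f (‖u i‖ ^ 2) + f (‖v i‖ ^ 2))) (i : ι) : u i = 0 ∨ v i = 0 := by
  by_contra! hne
  refine (Finset.sum_lt_sum (fun i _ => two_mul_add_le_norm_add_sq_add_norm_sub_sq hf hf0 _ _)
    ⟨i, Finset.mem_univ i, two_mul_add_lt_norm_add_sq_add_norm_sub_sq hf hf0 hne.1 hne.2⟩).ne ?_
  rw [h, Finset.mul_sum]

end StrictConvexOn

theorem exists_strictConvexOn_mul_rpow {q : ℝ} (hq0 : 0 < q) (hq2 : q ≠ 2) :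
    ∃ c : ℝ, c ≠ 0 ∧ StrictConvexOn ℝ (Ici 0) fun t : ℝ => c * t ^ (q / 2) := by
  rcases hq2.lt_or_gt with hlt | hgt
  · refine ⟨-1, by norm_num, ?_⟩
    simp only [neg_one_mul]
    exact (Real.strictConcaveOn_rpow (by positivity) (by linarith)).neg
  · refine ⟨1, one_ne_zero, ?_⟩
    simpa using strictConvexOn_rpow (by linarith : 1 < q / 2)

theorem norm_sq_rpow_half {F : Type*} [SeminormedAddCommGroup F] (x : F) (q : ℝ) :
    (‖x‖ ^ 2) ^ (q / 2) = ‖x‖ ^ q := by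
  rw [← Real.rpow_natCast_mul (norm_nonneg x)]
  ring_nf

variable {E : Type*} [NormedAddCommGroup E] [InnerProductSpace ℝ E] in
theorem eq_zero_or_eq_zero_of_sum_rpow_eq {ι : Type*} [Fintype ι] {q : ℝ} (hq0 : 0 < q)
    (hq2 : q ≠ 2) {u v : ι → E}
    (h : ∑ i, (‖u i + v i‖ ^ q + ‖u i - v i‖ ^ q) = 2 * ∑ i, (‖u i‖ ^ q + ‖v i‖ ^ q))
    (i : ι) : u i = 0 ∨ v i = 0 := by
  obtain ⟨c, hc, hf⟩ := exists_strictConvexOn_mul_rpow hq0 hq2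
  refine hf.eq_zero_or_eq_zero_of_sum_eq (by simp [Real.zero_rpow (by positivity : q / 2 ≠ 0)]) ?_ i
  simp only [norm_sq_rpow_half, ← mul_add, ← Finset.mul_sum, h]
  ring

theorem sum_norm_rpow_single {n β : Type*} [Fintype n] [DecidableEq n] [SeminormedAddCommGroup β]
    {q : ℝ} (hq : q ≠ 0) (j : n) (c : β) :
    ∑ i, ‖(Pi.single j c : n → β) i‖ ^ q = ‖c‖ ^ q := by
  rw [Fintype.sum_eq_single j fun i hi => by simp [hi, Real.zero_rpow hq], Pi.single_eq_same]

theorem Matrix.exists_perm_eq_zero_of_ne {n α : Type*} [Finite n] [Zero α] {M : Matrix n n α}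
    (hcol : ∀ j, ∃ i, M i j ≠ 0) (hdisj : ∀ i j k, j ≠ k → M i j = 0 ∨ M i k = 0) :
    ∃ σ : Equiv.Perm n, ∀ i j, σ j ≠ i → M i j = 0 := by
  choose τ hτ using hcol
  have hinj : Function.Injective τ := by
    intro j k hjk
    by_contra hne
    rcases hdisj (τ j) j k hne with h | h
    · exact hτ j h
    · exact hτ k (hjk ▸ h)
  refine ⟨Equiv.ofBijective τ (Finite.injective_iff_bijective.mp hinj), fun i j hij => ?_⟩
  obtain ⟨k, rfl⟩ := (Finite.injective_iff_bijective.mp hinj).2 i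
  have hkj : k ≠ j := fun h => hij (h ▸ rfl)
  exact (hdisj (τ k) k j hkj).resolve_left (hτ k)

namespace Matrix

variable {𝕜 n : Type*} [RCLike 𝕜] [Fintype n] [DecidableEq n] {q : ℝ} {s : Matrix n n 𝕜}

theorem sum_norm_col_rpow_eq_one (hq : q ≠ 0)
    (hs : ∀ ξ : n → 𝕜, ∑ i, ‖(s *ᵥ ξ) i‖ ^ q = ∑ i, ‖ξ i‖ ^ q) (j : n) :
    ∑ i, ‖s i j‖ ^ q = 1 := by
  simpa [mulVec_single_one, sum_norm_rpow_single hq] using hs (Pi.single j 1)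

theorem eq_zero_or_eq_zero_of_sum_norm_rpow_mulVec (hq0 : 0 < q) (hq2 : q ≠ 2)
    (hs : ∀ ξ : n → 𝕜, ∑ i, ‖(s *ᵥ ξ) i‖ ^ q = ∑ i, ‖ξ i‖ ^ q) (i : n) {j k : n} (hjk : j ≠ k) :
    s i j = 0 ∨ s i k = 0 := by
  have hpair : ∀ c : 𝕜, ‖c‖ = 1 → ∑ i, ‖s i j + c * s i k‖ ^ q = 2 := by
    intro c hc
    have hnorm : ∑ i, ‖(Pi.single j 1 + Pi.single k c : n → 𝕜) i‖ ^ q = 2 := by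
      rw [Fintype.sum_eq_add j k hjk fun i hi => by simp [hi.1, hi.2, Real.zero_rpow hq0.ne']]
      simp [hjk, hjk.symm, hc, one_add_one_eq_two]
    have hmul : s *ᵥ (Pi.single j 1 + Pi.single k c) = fun i => s i j + c * s i k := by
      ext i
      simp [mulVec_add, mulVec_single]
    have h := hs (Pi.single j 1 + Pi.single k c)
    rwa [hmul, hnorm] at h
  refine eq_zero_or_eq_zero_of_sum_rpow_eq hq0 hq2 (u := fun i => s i j) (v := fun i => s i k) ?_ i
  have hadd : ∑ i, ‖s i j + s i k‖ ^ q = 2 := by simpa using hpair 1 (by simp)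
  have hsub : ∑ i, ‖s i j - s i k‖ ^ q = 2 := by
    simpa [← sub_eq_add_neg] using hpair (-1) (by simp)
  rw [Finset.sum_add_distrib, Finset.sum_add_distrib, hadd, hsub,
    sum_norm_col_rpow_eq_one hq0.ne' hs, sum_norm_col_rpow_eq_one hq0.ne' hs]
  norm_num

theorem exists_perm_of_sum_norm_rpow_mulVec (hq0 : 0 < q) (hq2 : q ≠ 2)
    (hs : ∀ ξ : n → 𝕜, ∑ i, ‖(s *ᵥ ξ) i‖ ^ q = ∑ i, ‖ξ i‖ ^ q) :
    ∃ (σ : Equiv.Perm n) (l : n → 𝕜), (∀ j, ‖l j‖ = 1) ∧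
      s = of fun j k => if σ k = j then l k else 0 := by
  have hcol := sum_norm_col_rpow_eq_one hq0.ne' hs
  have hcol_ne : ∀ j, ∃ i, s i j ≠ 0 := fun j => by
    by_contra! h
    simpa [h, Real.zero_rpow hq0.ne'] using hcol j
  obtain ⟨σ, hσ⟩ := exists_perm_eq_zero_of_ne hcol_ne
    fun i j k hjk => eq_zero_or_eq_zero_of_sum_norm_rpow_mulVec hq0 hq2 hs i hjk
  refine ⟨σ, fun k => s (σ k) k, fun k => ?_, ?_⟩
  · have h := hcol k
    rw [Fintype.sum_eq_single (σ k) fun i hi => by simp [hσ i k (Ne.symm hi),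
      Real.zero_rpow hq0.ne']] at h
    rwa [← Real.one_rpow q, Real.rpow_left_inj (norm_nonneg _) zero_le_one hq0.ne'] at h
  · ext i k
    by_cases h : σ k = i
    · simp [h]
    · simp [h, hσ i k h]

theorem of_ite_perm_eq_permMatrix_inv_mul_diagonal {R : Type*} [CommRing R] (σ : Equiv.Perm n)
    (l : n → R) :
    (of fun j k => if σ k = j then l k else 0) = σ⁻¹.permMatrix R * diagonal l := by
  ext j k
  simp [mul_diagonal, PEquiv.toMatrix_apply, Equiv.toPEquiv_apply, Equiv.eq_symm_apply, eq_comm]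

theorem sum_norm_rpow_permMatrix_mul_diagonal_mulVec {σ : Equiv.Perm n} {l : n → 𝕜}
    (hl : ∀ j, ‖l j‖ = 1) (ξ : n → 𝕜) :
    ∑ i, ‖((σ.permMatrix 𝕜 * diagonal l) *ᵥ ξ) i‖ ^ q = ∑ i, ‖ξ i‖ ^ q := by
  simp only [← mulVec_mulVec, permMatrix_mulVec, Function.comp_apply, mulVec_diagonal, norm_mul,
    hl, one_mul]
  exact Equiv.sum_comp σ fun i => ‖ξ i‖ ^ q

end Matrix

theorem PiLp.norm_rpow_eq_sum {p : ℝ≥0∞} {ι : Type*} [Fintype ι] {β : ι → Type*}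
    [∀ i, SeminormedAddCommGroup (β i)] (hp : 0 < p.toReal) (f : PiLp p β) :
    ‖f‖ ^ p.toReal = ∑ i, ‖f i‖ ^ p.toReal := by
  rw [PiLp.norm_eq_sum hp, ← Real.rpow_mul (by positivity), one_div_mul_cancel hp.ne',
    Real.rpow_one]

theorem forall_norm_matrixLp_apply_eq_iff {p : ℝ≥0∞} [Fact (1 ≤ p)] (hp : p ≠ ⊤) {d : ℕ}
    (s : Matrix (Fin d) (Fin d) ℂ) :
    (∀ ξ, ‖matrixLp p s ξ‖ = ‖ξ‖) ↔
      ∀ ξ : Fin d → ℂ, ∑ i, ‖(s *ᵥ ξ) i‖ ^ p.toReal = ∑ i, ‖ξ i‖ ^ p.toReal := by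
  have hq : 0 < p.toReal :=
    ENNReal.toReal_pos (zero_lt_one.trans_le Fact.out).ne' hp
  refine (WithLp.equiv p _).forall_congr fun ξ => ?_
  rw [← Real.rpow_left_inj (norm_nonneg _) (norm_nonneg _) hq.ne', PiLp.norm_rpow_eq_sum hq,
    PiLp.norm_rpow_eq_sum hq]
  rfl

theorem stmt_13_general (p : ℝ≥0∞) [Fact (1 ≤ p)] (hp : p ≠ ⊤) (hp2 : p ≠ 2) (d : ℕ)
    (s : Matrix (Fin d) (Fin d) ℂ) :
    (IsUnit s ∧ ∀ ξ : PiLp p (fun _ : Fin d => ℂ), ‖matrixLp p s ξ‖ = ‖ξ‖) ↔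
      ∃ (σ : Equiv.Perm (Fin d)) (l : Fin d → ℂ), (∀ j, ‖l j‖ = 1) ∧
        s = Matrix.of fun j k => if σ k = j then l k else 0 := by
  have hq0 : 0 < p.toReal := ENNReal.toReal_pos (zero_lt_one.trans_le Fact.out).ne' hp
  have hq2 : p.toReal ≠ 2 := fun h => hp2 (by rw [← ENNReal.ofReal_toReal hp, h]; simp)
  rw [forall_norm_matrixLp_apply_eq_iff hp]
  constructor
  · rintro ⟨-, hs⟩
    exact s.exists_perm_of_sum_norm_rpow_mulVec hq0 hq2 hs
  · rintro ⟨σ, l, hl, rfl⟩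
    rw [Matrix.of_ite_perm_eq_permMatrix_inv_mul_diagonal]
    have hl0 : IsUnit l := Pi.isUnit_iff.2 fun j => (norm_ne_zero_iff.1 (by simp [hl])).isUnit
    exact ⟨((Group.isUnit σ).map (Matrix.permMatrixHom (R := ℂ))).mul
      (Matrix.isUnit_diagonal.2 hl0), Matrix.sum_norm_rpow_permMatrix_mul_diagonal_mulVec hl⟩

/-- For `p ∈ [1, ∞)`, `p ≠ 2`, a matrix `s ∈ M_d(ℂ)` is an invertible
isometry of `ℓ^p_d` iff it is a complex permutation matrix
`s = ∑_j λ_j e_{σ(j), j}` with `σ` a permutation and `|λ_j| = 1`. -/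
theorem stmt_13 (p : ℝ≥0∞) [Fact (1 ≤ p)] (hp : p ≠ ⊤) (hp2 : p ≠ 2) (d : ℕ) (hd : 0 < d)
    (s : Matrix (Fin d) (Fin d) ℂ) :
    (IsUnit s ∧ ∀ ξ : PiLp p (fun _ : Fin d => ℂ), ‖matrixLp p s ξ‖ = ‖ξ‖) ↔
      ∃ (σ : Equiv.Perm (Fin d)) (l : Fin d → ℂ), (∀ j, ‖l j‖ = 1) ∧
        s = Matrix.of fun j k => if σ k = j then l k else 0 :=
  stmt_13_general p hp hp2 d s
end
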